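/- arXiv:2510.11206 — 4 statements merged into one kernel-verified Lean document; each statement's English description precedes it below -/
import Mathlib

section
/- Let X be a real Hilbert space, n ≥ 1, and F : X → ℝⁿ a C² map such that dF|_u is surjective for every u ∈ X. Suppose there exists C > 0 such that ‖G(u)⁻¹‖ ≤ C(1+‖u‖)² for all u ∈ X, where G(u) := dF|_u ∘ dF|_u*. Then for every u⁰ ∈ X and every C¹ curve γ : [0,1] → ℝⁿ with γ(0) = F(u⁰), the path-lifting equation u'(s) = dF|_{u(s)}* (G(u(s)))⁻¹ γ'(s) with initial condition u(0) = u⁰ has a solution defined on all of [0,1]; in particular F is surjective. -/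
/-!
The lifting equation is the ODE `u' = P(u) γ'` with `P(u) = dF|_u* G(u)⁻¹`. Since `G` is
invertible everywhere, `P` is `C¹`, hence locally Lipschitz; and since
`‖P(u)‖² = ‖G(u)⁻¹‖ ≤ C (1 + ‖u‖)²`, the field grows at most linearly. Grönwall's inequality
then bounds all local solutions a priori, so their speed stays bounded up to the supremum `T` of
the existence times. Local Lipschitz constants need not be uniform on bounded sets of an
infinite-dimensional space, so the solutions are continued past `T` from their limit point at `T`
(which exists by completeness), using Picard–Lindelöf there. Finally `dF|_u P(u) = id`, so
`F ∘ u - γ` is constant; lifting the segment from `F 0` to `y` produces a preimage of `y`.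
-/

open Set
open scoped RealInnerProductSpace

/-- The Gramian `G(u) := dF|_u ∘ dF|_u*` of a map `F` from a real Hilbert space
to `ℝⁿ`, a linear operator on `ℝⁿ`. -/
noncomputable def gram {X : Type*} [NormedAddCommGroup X] [InnerProductSpace ℝ X]
    [CompleteSpace X] {n : ℕ} (F : X → EuclideanSpace ℝ (Fin n)) (u : X) :
    EuclideanSpace ℝ (Fin n) →L[ℝ] EuclideanSpace ℝ (Fin n) :=
  (fderiv ℝ F u).comp (ContinuousLinearMap.adjoint (fderiv ℝ F u))

open Filter Metric Topology
open scoped NNReal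

theorem UniformContinuousOn.exists_tendsto_nhdsWithin {α β : Type*} [UniformSpace α]
    [UniformSpace β] [CompleteSpace β] {f : α → β} {s : Set α} {x : α}
    (hf : UniformContinuousOn f s) (hx : x ∈ closure s) :
    ∃ y, Tendsto f (𝓝[s] x) (𝓝 y) := by
  have := mem_closure_iff_nhdsWithin_neBot.mp hx
  refine cauchy_map_iff_exists_tendsto.mp (cauchy_map_iff.mpr ⟨this, hf.mono_left ?_⟩)
  rw [← nhdsWithin_prod_eq]
  exact inf_le_inf_right _ (nhds_le_uniformity x)

theorem nonneg_of_norm_le_mul_one_add_norm {E : Type*} [NormedAddCommGroup E] {v : ℝ → E → E}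
    {K : ℝ} (hgrow : ∀ t x, ‖v t x‖ ≤ K * (1 + ‖x‖)) : 0 ≤ K := by
  simpa using (norm_nonneg _).trans (hgrow 0 0)

section ODE

variable {E : Type*} [NormedAddCommGroup E] [NormedSpace ℝ E]

def LocallyLipschitzUniformlyInTime (v : ℝ → E → E) : Prop :=
  ∀ x : E, ∃ L : ℝ≥0, ∃ U ∈ 𝓝 x, ∀ t, LipschitzOnWith L (v t) U

variable {v : ℝ → E → E} {u w : ℝ → E} {s s' : Set ℝ} {a b K : ℝ}

namespace IsIntegralCurveOn

theorem congr (hu : IsIntegralCurveOn u v s) (h : EqOn w u s) : IsIntegralCurveOn w v s :=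
  fun t ht => h ht ▸ (hu t ht).congr_of_mem h ht

theorem union_of_isClosed (h : IsIntegralCurveOn u v s) (h' : IsIntegralCurveOn u v s')
    (hs : IsClosed s) (hs' : IsClosed s') : IsIntegralCurveOn u v (s ∪ s') := by
  have key {s : Set ℝ} (h : IsIntegralCurveOn u v s) (hs : IsClosed s) (t : ℝ) :
      HasDerivWithinAt u (v t (u t)) s t := by
    by_cases ht : t ∈ s
    · exact h t ht
    · exact hasDerivWithinAt_iff_hasFDerivWithinAt.mpr
        (.of_notMem_closure (by rwa [hs.closure_eq]))
  exact fun t _ => (key h hs t).union (key h' hs' t)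

theorem of_subsingleton (hs : s.Subsingleton) : IsIntegralCurveOn u v s :=
  fun _ _ => hasDerivWithinAt_iff_hasFDerivWithinAt.mpr (.of_subsingleton hs)

theorem hasDerivWithinAt_Ici (hu : IsIntegralCurveOn u v (Icc a b)) {t : ℝ} (ht : t ∈ Ico a b) :
    HasDerivWithinAt u (v t (u t)) (Ici t) t :=
  (hu t (Ico_subset_Icc_self ht)).mono_of_mem_nhdsWithin (Icc_mem_nhdsGE_of_mem ht)

theorem eqOn_Icc (hv : LocallyLipschitzUniformlyInTime v) (hu : IsIntegralCurveOn u v (Icc a b))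
    (hw : IsIntegralCurveOn w v (Icc a b)) (ha : u a = w a) : EqOn u w (Icc a b) := by
  -- The coincidence set is closed, and local uniqueness extends it to the right of its points.
  refine IsClosed.Icc_subset_of_forall_exists_gt (s := {t | u t = w t}) ?_ ha fun x hx y hxy => ?_
  · convert isClosed_Icc.isClosed_eq hu.continuousOn hw.continuousOn using 1
    ext; simp [and_comm]
  obtain ⟨hx, hxab⟩ := hx
  obtain ⟨L, U, hU, hL⟩ := hv (u x)
  have near {f : ℝ → E} (hf : IsIntegralCurveOn f v (Icc a b)) (hfx : f x = u x) :
      ∀ᶠ t in 𝓝[≥] x, f t ∈ U :=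
    (hf.continuousWithinAt (Ico_subset_Icc_self hxab)).mono_of_mem_nhdsWithin
      (Icc_mem_nhdsGE_of_mem hxab) (hfx ▸ hU)
  have hlt : ∀ᶠ t in 𝓝[≥] x, t < min b y :=
    mem_nhdsWithin_of_mem_nhds (Iio_mem_nhds (lt_min hxab.2 hxy))
  obtain ⟨z, hxz, hz⟩ := mem_nhdsGE_iff_exists_Ico_subset.mp
    ((near hu rfl).and ((near hw hx.symm).and hlt))
  have hsub : Icc x ((x + z) / 2) ⊆ Ico x z := fun t ht =>
    ⟨ht.1, ht.2.trans_lt (by linarith [mem_Ioi.mp hxz])⟩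
  have hIco : Ico x ((x + z) / 2) ⊆ Ico a b := fun t ht =>
    ⟨hxab.1.trans ht.1, ((hz (hsub (Ico_subset_Icc_self ht))).2.2).trans_le (min_le_left _ _)⟩
  have hIcc : Icc x ((x + z) / 2) ⊆ Icc a b := fun t ht =>
    ⟨hxab.1.trans ht.1, ((hz (hsub ht)).2.2).le.trans (min_le_left _ _)⟩
  refine ⟨(x + z) / 2, ?_, by linarith [mem_Ioi.mp hxz], ?_⟩
  · exact ODE_solution_unique_of_mem_Icc_right (s := fun _ => U) (fun t _ => hL t)
      (hu.continuousOn.mono hIcc) (fun t ht => hu.hasDerivWithinAt_Ici (hIco ht))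
      (fun t ht => (hz (hsub (Ico_subset_Icc_self ht))).1)
      (hw.continuousOn.mono hIcc) (fun t ht => hw.hasDerivWithinAt_Ici (hIco ht))
      (fun t ht => (hz (hsub (Ico_subset_Icc_self ht))).2.1) hx
      ⟨by linarith [mem_Ioi.mp hxz], le_rfl⟩
  · exact ((hz (hsub ⟨by linarith [mem_Ioi.mp hxz], le_rfl⟩)).2.2).le.trans (min_le_right _ _)

theorem norm_le_gronwallBound (hgrow : ∀ t x, ‖v t x‖ ≤ K * (1 + ‖x‖))
    (hu : IsIntegralCurveOn u v (Icc a b)) :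
    ∀ t ∈ Icc a b, ‖u t‖ ≤ gronwallBound ‖u a‖ K K (t - a) :=
  norm_le_gronwallBound_of_norm_deriv_right_le hu.continuousOn
    (fun _ ht => hu.hasDerivWithinAt_Ici ht) le_rfl
    (fun t _ => (hgrow t (u t)).trans_eq (by ring))

theorem dist_le_of_norm_le (hgrow : ∀ t x, ‖v t x‖ ≤ K * (1 + ‖x‖))
    (hu : IsIntegralCurveOn u v (Icc a b)) {R : ℝ} (hR : ∀ t ∈ Icc a b, ‖u t‖ ≤ R) {t₁ t₂ : ℝ}
    (ht₁ : t₁ ∈ Icc a b) (ht₂ : t₂ ∈ Icc a b) :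
    dist (u t₁) (u t₂) ≤ K * (1 + R) * dist t₁ t₂ := by
  have hK := nonneg_of_norm_le_mul_one_add_norm hgrow
  rw [dist_comm, dist_eq_norm, dist_comm, Real.dist_eq, ← Real.norm_eq_abs]
  refine Convex.norm_image_sub_le_of_norm_hasDerivWithin_le hu (fun t ht => ?_)
    (convex_Icc a b) ht₁ ht₂
  exact (hgrow t (u t)).trans (by gcongr; exact hR t ht)

end IsIntegralCurveOn

variable [CompleteSpace E]

theorem exists_isIntegralCurveOn_Icc_of_lipschitzOnWith {c x : E} {r M t₀ δ : ℝ} {L : ℝ≥0}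
    (hr : 0 < r) (hL : ∀ t, LipschitzOnWith L (v t) (closedBall c r))
    (hcont : ∀ x, Continuous (v · x)) (hM : ∀ t, ∀ y ∈ closedBall c r, ‖v t y‖ ≤ M)
    (hδ : 0 ≤ δ) (hMδ : M * δ ≤ r / 2) (hx : x ∈ closedBall c (r / 2)) :
    ∃ w, w t₀ = x ∧ IsIntegralCurveOn w v (Icc t₀ (t₀ + δ)) := by
  have hM0 : 0 ≤ M := (norm_nonneg _).trans (hM 0 c (mem_closedBall_self hr.le))
  have hPL : IsPicardLindelof v (tmin := t₀) (tmax := t₀ + δ) ⟨t₀, le_rfl, by linarith⟩ c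
      ⟨r, hr.le⟩ ⟨r / 2, by positivity⟩ ⟨M, hM0⟩ L :=
    { lipschitzOnWith := fun t _ => hL t
      continuousOn := fun x _ => (hcont x).continuousOn
      norm_le := fun t _ x hx => hM t x hx
      mul_max_le := by
        show M * max (t₀ + δ - t₀) (t₀ - t₀) ≤ r - r / 2
        rw [add_sub_cancel_left, sub_self, max_eq_left hδ]
        linarith }
  exact hPL.exists_eq_forall_mem_Icc_hasDerivWithinAt hx

theorem exists_pos_forall_mem_closedBall_extend (hv : LocallyLipschitzUniformlyInTime v)
    (hcont : ∀ x, Continuous (v · x)) (hgrow : ∀ t x, ‖v t x‖ ≤ K * (1 + ‖x‖)) (c : E) :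
    ∃ δ > 0, ∃ ρ > 0, ∀ t u, a ≤ t → IsIntegralCurveOn u v (Icc a t) → u t ∈ closedBall c ρ →
      ∃ w, EqOn w u (Icc a t) ∧ IsIntegralCurveOn w v (Icc a (t + δ)) := by
  obtain ⟨L, U, hU, hL⟩ := hv c
  obtain ⟨r, hr, hrU⟩ := nhds_basis_closedBall.mem_iff.mp hU
  have hK := nonneg_of_norm_le_mul_one_add_norm hgrow
  have hM : ∀ t, ∀ y ∈ closedBall c r, ‖v t y‖ ≤ K * (1 + (‖c‖ + r)) := fun t y hy =>
    (hgrow t y).trans (by gcongr; exact norm_le_of_mem_closedBall hy)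
  set M := K * (1 + (‖c‖ + r))
  have hM0 : 0 ≤ M := (norm_nonneg _).trans (hM 0 c (mem_closedBall_self hr.le))
  refine ⟨r / (2 * (M + 1)), by positivity, r / 2, by positivity, fun t u hat hu hut => ?_⟩
  have hMδ : M * (r / (2 * (M + 1))) ≤ r / 2 := by
    rw [mul_div, div_le_div_iff₀ (by positivity) (by positivity)]
    nlinarith
  obtain ⟨w, hwt, hw⟩ := exists_isIntegralCurveOn_Icc_of_lipschitzOnWith (t₀ := t) hr
    (fun t => (hL t).mono hrU) hcont hM (by positivity) hMδ hut
  have heq : EqOn (fun s => if s ≤ t then u s else w s) u (Icc a t) := fun s hs => if_pos hs.2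
  refine ⟨_, heq, ?_⟩
  rw [← Icc_union_Icc_eq_Icc hat (le_add_of_nonneg_right (by positivity))]
  refine (hu.congr heq).union_of_isClosed (hw.congr fun s hs => ?_) isClosed_Icc isClosed_Icc
  rcases hs.1.eq_or_lt with rfl | hts
  · exact (if_pos le_rfl).trans hwt.symm
  · exact if_neg hts.not_ge

theorem exists_tendsto_nhdsWithin_Ico_of_isIntegralCurveOn (hv : LocallyLipschitzUniformlyInTime v)
    (hgrow : ∀ t x, ‖v t x‖ ≤ K * (1 + ‖x‖)) {T : ℝ} (haT : a < T) {x₀ : E} {U : ℝ → ℝ → E}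
    (hU : ∀ t ∈ Ico a T, U t a = x₀ ∧ IsIntegralCurveOn (U t) v (Icc a t)) :
    ∃ c, Tendsto (fun t => U t t) (𝓝[Ico a T] T) (𝓝 c) := by
  have hK := nonneg_of_norm_le_mul_one_add_norm hgrow
  set R := gronwallBound ‖x₀‖ K K (T - a)
  have hbound : ∀ t ∈ Ico a T, ∀ s ∈ Icc a t, ‖U t s‖ ≤ R := fun t ht s hs => by
    refine ((hU t ht).2.norm_le_gronwallBound hgrow s hs).trans ?_
    rw [(hU t ht).1]
    exact gronwallBound_mono (norm_nonneg _) hK hK (by linarith [hs.2, ht.2])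
  have hR : 0 ≤ R := (norm_nonneg _).trans (hbound a ⟨le_rfl, haT⟩ a ⟨le_rfl, le_rfl⟩)
  -- By uniqueness the curves `U t` agree where they overlap, so `t ↦ U t t` is Lipschitz.
  have hlip : LipschitzOnWith ⟨K * (1 + R), by positivity⟩ (fun t => U t t) (Ico a T) := by
    refine LipschitzOnWith.of_dist_le_mul fun t ht t' ht' => ?_
    wlog htt' : t ≤ t' generalizing t t'
    · rw [dist_comm, dist_comm t]
      exact this t' ht' t ht (le_of_not_ge htt')
    have hsub : Icc a t ⊆ Icc a t' := Icc_subset_Icc_right htt'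
    have heq : U t t = U t' t := (hU t ht).2.eqOn_Icc hv ((hU t' ht').2.mono hsub)
      ((hU t ht).1.trans (hU t' ht').1.symm) ⟨ht.1, le_rfl⟩
    rw [heq]
    exact (hU t' ht').2.dist_le_of_norm_le hgrow (hbound t' ht') ⟨ht.1, htt'⟩ ⟨ht'.1, le_rfl⟩
  exact hlip.uniformContinuousOn.exists_tendsto_nhdsWithin
    (by rw [closure_Ico haT.ne]; exact right_mem_Icc.mpr haT.le)

theorem exists_isIntegralCurveOn_Icc (hv : LocallyLipschitzUniformlyInTime v)
    (hcont : ∀ x, Continuous (v · x)) (hgrow : ∀ t x, ‖v t x‖ ≤ K * (1 + ‖x‖))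
    (x₀ : E) (a b : ℝ) : ∃ u, u a = x₀ ∧ IsIntegralCurveOn u v (Icc a b) := by
  set S := {t | ∃ u, u a = x₀ ∧ IsIntegralCurveOn u v (Icc a t)}
  have hdown : ∀ t ∈ S, ∀ t' ≤ t, t' ∈ S := fun t ⟨u, hu0, hu⟩ t' h =>
    ⟨u, hu0, hu.mono (Icc_subset_Icc_right h)⟩
  have haS : a ∈ S := ⟨fun _ => x₀, rfl, Icc_self a ▸ .of_subsingleton subsingleton_singleton⟩
  by_contra hb
  have hbdd : BddAbove S := ⟨b, fun t ht => not_lt.mp fun hbt => hb (hdown t ht b hbt.le)⟩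
  set T := sSup S
  have hT : ∀ t ∈ S, t ≤ T := fun t ht => le_csSup hbdd ht
  obtain ⟨c, hc⟩ : ∃ c, ∀ ρ > 0, ∀ δ > 0, ∃ t u, a ≤ t ∧ u a = x₀ ∧
      IsIntegralCurveOn u v (Icc a t) ∧ u t ∈ closedBall c ρ ∧ T < t + δ := by
    by_cases hTS : T ∈ S
    · obtain ⟨u, hu0, hu⟩ := hTS
      exact ⟨u T, fun ρ hρ δ hδ => ⟨T, u, hT a haS, hu0, hu, mem_closedBall_self hρ.le,
        lt_add_of_pos_right T hδ⟩⟩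
    have hIco : Ico a T ⊆ S := fun t ht => by
      obtain ⟨s, hs, hts⟩ := exists_lt_of_lt_csSup ⟨a, haS⟩ ht.2
      exact hdown s hs t hts.le
    have haT : a < T := (hT a haS).lt_of_ne fun h => hTS (h ▸ haS)
    choose! U hU using fun t (ht : t ∈ Ico a T) => hIco ht
    obtain ⟨c, hc⟩ := exists_tendsto_nhdsWithin_Ico_of_isIntegralCurveOn hv hgrow haT hU
    have : (𝓝[Ico a T] T).NeBot := mem_closure_iff_nhdsWithin_neBot.mp
      (by rw [closure_Ico haT.ne]; exact right_mem_Icc.mpr haT.le)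
    refine ⟨c, fun ρ hρ δ hδ => ?_⟩
    obtain ⟨t, ht, hUt, htδ⟩ := (eventually_mem_nhdsWithin.and
      ((hc.eventually (closedBall_mem_nhds c hρ)).and
        ((eventually_gt_nhds (sub_lt_self T hδ)).filter_mono nhdsWithin_le_nhds))).exists
    exact ⟨t, U t, ht.1, (hU t ht).1, (hU t ht).2, hUt, by linarith⟩
  obtain ⟨δ, hδ, ρ, hρ, hext⟩ := exists_pos_forall_mem_closedBall_extend hv hcont hgrow c
  obtain ⟨t, u, hat, hu0, hu, hut, hTt⟩ := hc ρ hρ δ hδ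
  obtain ⟨w, hwu, hw⟩ := hext t u hat hu hut
  exact (hT _ ⟨w, (hwu ⟨le_rfl, hat⟩).trans hu0, hw⟩).not_gt hTt

end ODE

namespace ContinuousLinearMap

section RCLike

variable {𝕜 E F : Type*} [RCLike 𝕜] [NormedAddCommGroup E] [InnerProductSpace 𝕜 E]
  [CompleteSpace E] [NormedAddCommGroup F] [InnerProductSpace 𝕜 F] [CompleteSpace F]

noncomputable def rightPseudoInverse (A : E →L[𝕜] F) : F →L[𝕜] E :=
  adjoint A ∘L Ring.inverse (A ∘L adjoint A)

theorem apply_rightPseudoInverse_apply {A : E →L[𝕜] F} (hA : IsUnit (A ∘L adjoint A)) (y : F) :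
    A (A.rightPseudoInverse y) = y :=
  congr($(Ring.mul_inverse_cancel _ hA) y)

theorem norm_rightPseudoInverse (A : E →L[𝕜] F) :
    ‖A.rightPseudoInverse‖ = √‖Ring.inverse (A ∘L adjoint A)‖ := by
  set Q := Ring.inverse (A ∘L adjoint A)
  by_cases hA : IsUnit (A ∘L adjoint A)
  · have hQ : adjoint A.rightPseudoInverse ∘L A.rightPseudoInverse = adjoint Q := by
      rw [rightPseudoInverse, adjoint_comp, adjoint_adjoint]
      change adjoint Q * ((A ∘L adjoint A) * Q) = adjoint Q
      rw [Ring.mul_inverse_cancel _ hA, mul_one]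
    rw [← LinearIsometryEquiv.norm_map adjoint Q, ← hQ, norm_adjoint_comp_self,
      Real.sqrt_mul_self (norm_nonneg _)]
  · simp [rightPseudoInverse, Q, Ring.inverse_non_unit _ hA]

theorem isUnit_comp_adjoint_of_surjective [FiniteDimensional 𝕜 F] {A : E →L[𝕜] F}
    (hA : Function.Surjective A) : IsUnit (A ∘L adjoint A) := by
  have hinj : Function.Injective (A ∘L adjoint A) := by
    rw [← coe_coe, ← LinearMap.ker_eq_bot, ker_self_comp_adjoint, ← orthogonal_range,
      LinearMap.range_eq_top.mpr hA, Submodule.top_orthogonal_eq_bot]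
  exact isUnit_iff_bijective.mpr
    ⟨hinj, LinearMap.surjective_of_injective (f := (A ∘L adjoint A : F →ₗ[𝕜] F)) hinj⟩

end RCLike

section Real

variable {E F : Type*} [NormedAddCommGroup E] [InnerProductSpace ℝ E]
  [CompleteSpace E] [NormedAddCommGroup F] [InnerProductSpace ℝ F] [CompleteSpace F]

theorem isBoundedLinearMap_adjoint :
    IsBoundedLinearMap ℝ (adjoint : (E →L[ℝ] F) → F →L[ℝ] E) where
  map_add := map_add adjoint
  map_smul c A := by simp
  bound := ⟨1, one_pos, fun A => by simp⟩

end Real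

end ContinuousLinearMap

open ContinuousLinearMap in
theorem ContDiff.rightPseudoInverse {Z E F : Type*} [NormedAddCommGroup Z] [NormedSpace ℝ Z]
    [NormedAddCommGroup E] [InnerProductSpace ℝ E] [CompleteSpace E]
    [NormedAddCommGroup F] [InnerProductSpace ℝ F] [CompleteSpace F]
    {k : WithTop ℕ∞} {φ : Z → E →L[ℝ] F} (hφ : ContDiff ℝ k φ)
    (hunit : ∀ z, IsUnit (φ z ∘L adjoint (φ z))) :
    ContDiff ℝ k fun z => (φ z).rightPseudoInverse := by
  have hφ' : ContDiff ℝ k fun z => adjoint (φ z) := isBoundedLinearMap_adjoint.contDiff.comp hφ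
  refine contDiff_iff_contDiffAt.mpr fun z => hφ'.contDiffAt.clm_comp ?_
  have := contDiffAt_ringInverse ℝ (n := k) (hunit z).unit
  rw [(hunit z).unit_spec] at this
  exact this.comp z (hφ.clm_comp hφ').contDiffAt

theorem exists_hasDerivWithinAt_apply_of_locallyLipschitz {E F : Type*} [NormedAddCommGroup E]
    [NormedSpace ℝ E] [CompleteSpace E] [NormedAddCommGroup F] [NormedSpace ℝ F]
    {P : E → F →L[ℝ] E} {K a b : ℝ} (hP : LocallyLipschitz P)
    (hgrow : ∀ x, ‖P x‖ ≤ K * (1 + ‖x‖)) (hab : a ≤ b) {g : ℝ → F}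
    (hg : ContinuousOn g (Icc a b)) (x₀ : E) :
    ∃ u : ℝ → E, u a = x₀ ∧ ∀ s ∈ Icc a b, HasDerivWithinAt u (P (u s) (g s)) (Icc a b) s := by
  obtain ⟨M, hM⟩ := isCompact_Icc.exists_bound_of_continuousOn hg
  set g' := IccExtend hab fun s : Icc a b => g s
  have hg'M : ∀ s, ‖g' s‖ ≤ M := fun s => hM _ (projIcc a b hab s).2
  have hM0 : 0 ≤ M := (norm_nonneg _).trans (hg'M a)
  have hlip : LocallyLipschitzUniformlyInTime fun s x => P x (g' s) := fun x => by
    obtain ⟨L, U, hU, hL⟩ := hP x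
    refine ⟨⟨M, hM0⟩ * L, U, hU, fun s => ?_⟩
    exact ((ContinuousLinearMap.lipschitz_apply (g' s)).weaken (hg'M s)).comp_lipschitzOnWith hL
  have hgrow' : ∀ s x, ‖P x (g' s)‖ ≤ K * M * (1 + ‖x‖) := fun s x =>
    ((P x).le_opNorm _).trans ((mul_le_mul (hgrow x) (hg'M s) (norm_nonneg _)
      ((norm_nonneg _).trans (hgrow x))).trans_eq (by ring))
  obtain ⟨u, hu0, hu⟩ := exists_isIntegralCurveOn_Icc hlip
    (fun x => (P x).continuous.comp (continuousOn_iff_continuous_domRestrict.mp hg).Icc_extend')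
    hgrow' x₀ a b
  refine ⟨u, hu0, fun s hs => ?_⟩
  simpa [g', IccExtend_of_mem hab _ hs] using hu s hs

theorem global_path_lifting_general
    {X : Type*} [NormedAddCommGroup X] [InnerProductSpace ℝ X] [CompleteSpace X]
    {n : ℕ} (F : X → EuclideanSpace ℝ (Fin n)) (hF : ContDiff ℝ 2 F)
    (hsurj : ∀ u : X, Function.Surjective (fderiv ℝ F u))
    (C : ℝ)
    (hbound : ∀ u : X, ‖Ring.inverse (gram F u)‖ ≤ C * (1 + ‖u‖) ^ 2) :
    (∀ (u0 : X) (γ γ' : ℝ → EuclideanSpace ℝ (Fin n)),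
      (∀ s ∈ Icc (0:ℝ) 1, HasDerivWithinAt γ (γ' s) (Icc 0 1) s) →
      ContinuousOn γ' (Icc 0 1) → γ 0 = F u0 →
      ∃ u : ℝ → X, u 0 = u0 ∧ ∀ s ∈ Icc (0:ℝ) 1,
        HasDerivWithinAt u
          ((ContinuousLinearMap.adjoint (fderiv ℝ F (u s)))
            (Ring.inverse (gram F (u s)) (γ' s))) (Icc 0 1) s) ∧
    Function.Surjective F := by
  have hunit (u : X) : IsUnit (gram F u) :=
    ContinuousLinearMap.isUnit_comp_adjoint_of_surjective (hsurj u)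
  have hP : ContDiff ℝ 1 fun u => (fderiv ℝ F u).rightPseudoInverse :=
    (hF.fderiv_right (by norm_num)).rightPseudoInverse hunit
  have hPgrow (u : X) : ‖(fderiv ℝ F u).rightPseudoInverse‖ ≤ √C * (1 + ‖u‖) := by
    rw [ContinuousLinearMap.norm_rightPseudoInverse, ← Real.sqrt_sq (by positivity : 0 ≤ 1 + ‖u‖),
      ← Real.sqrt_mul' _ (sq_nonneg _)]
    exact Real.sqrt_le_sqrt (hbound u)
  have hlift (u0 : X) {γ' : ℝ → EuclideanSpace ℝ (Fin n)} (hγ' : ContinuousOn γ' (Icc 0 1)) :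
      ∃ u : ℝ → X, u 0 = u0 ∧ ∀ s ∈ Icc (0:ℝ) 1,
        HasDerivWithinAt u ((fderiv ℝ F (u s)).rightPseudoInverse (γ' s)) (Icc 0 1) s :=
    exists_hasDerivWithinAt_apply_of_locallyLipschitz hP.locallyLipschitz hPgrow zero_le_one hγ' u0
  refine ⟨fun u0 _ _ _ hγ' _ => hlift u0 hγ', fun y => ?_⟩
  obtain ⟨u, hu0, hu⟩ := hlift 0 (γ' := fun _ => y - F 0) continuousOn_const
  have hderiv : ∀ s ∈ Icc (0:ℝ) 1,
      HasDerivWithinAt (fun s => F (u s) - s • (y - F 0)) 0 (Icc 0 1) s := fun s hs => by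
    have hcomp := ((hF.differentiable (by norm_num) (u s)).hasFDerivAt.comp_hasDerivWithinAt s
      (hu s hs)).sub ((hasDerivWithinAt_id s _).smul_const (y - F 0))
    rwa [ContinuousLinearMap.apply_rightPseudoInverse_apply (hunit (u s)), one_smul,
      sub_self] at hcomp
  have hconst := Convex.norm_image_sub_le_of_norm_hasDerivWithin_le hderiv
    (fun _ _ => norm_zero.le) (convex_Icc 0 1) (left_mem_Icc.mpr zero_le_one)
    (right_mem_Icc.mpr zero_le_one)
  refine ⟨u 1, ?_⟩
  simpa [hu0, sub_eq_zero, sub_eq_iff_eq_add] using hconst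

/-- If `F : X → ℝⁿ` is `C²` with everywhere surjective differential and
`‖G(u)⁻¹‖ ≤ C (1 + ‖u‖)²`, then for every starting point `u⁰` and every `C¹`
curve `γ` on `[0,1]` with `γ(0) = F(u⁰)`, the path-lifting equation
`u'(s) = dF|_{u(s)}* (G(u(s)))⁻¹ γ'(s)`, `u(0) = u⁰` has a global solution on
`[0,1]`; in particular `F` is surjective. -/
theorem global_path_lifting
    {X : Type*} [NormedAddCommGroup X] [InnerProductSpace ℝ X] [CompleteSpace X]
    {n : ℕ} (hn : 1 ≤ n) (F : X → EuclideanSpace ℝ (Fin n)) (hF : ContDiff ℝ 2 F)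
    (hsurj : ∀ u : X, Function.Surjective (fderiv ℝ F u))
    (C : ℝ) (hC : 0 < C)
    (hbound : ∀ u : X, ‖Ring.inverse (gram F u)‖ ≤ C * (1 + ‖u‖) ^ 2) :
    (∀ (u0 : X) (γ γ' : ℝ → EuclideanSpace ℝ (Fin n)),
      (∀ s ∈ Icc (0:ℝ) 1, HasDerivWithinAt γ (γ' s) (Icc 0 1) s) →
      ContinuousOn γ' (Icc 0 1) → γ 0 = F u0 →
      ∃ u : ℝ → X, u 0 = u0 ∧ ∀ s ∈ Icc (0:ℝ) 1,
        HasDerivWithinAt u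
          ((ContinuousLinearMap.adjoint (fderiv ℝ F (u s)))
            (Ring.inverse (gram F (u s)) (γ' s))) (Icc 0 1) s) ∧
    Function.Surjective F :=
  global_path_lifting_general F hF hsurj C hbound
end

section
/- Let u : I → X be a solution of the PLE on an interval I ⊆ [0,1) with λ₁(s) > 0 on I, and assume λ_i(s) ≥ λ₀ > 0 for all i = 2,…,n and s ∈ I. Then, with C̄ := (n−1)·(sup_{s∈[0,1]}‖γ'(s)‖)/√λ₀, one has ‖u'(s)‖ ≤ |a₁(s)|/√λ₁(s) + C̄ for every s ∈ I. -/
/-!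
Expand `γ'(s)` in the eigenbasis `z(s)` of `G(u(s))`. Then `G⁻¹` divides the `i`-th coordinate
`a_i` by `λ_i`, while `dF*` stretches the unit vector `z_i` to length `√λ_i`, since
`‖dF* z_i‖² = ⟪G z_i, z_i⟫ = λ_i`. The triangle inequality therefore gives
`‖u'‖ ≤ ∑ |a_i| / √λ_i`, and for `i ≥ 2` each term is at most `sup ‖γ'‖ / √λ₀`.
-/

open Set
open scoped RealInnerProductSpace

open scoped InnerProduct

theorem Finset.sum_le_add_mul_of_forall_ne_le {ι : Type*} [Fintype ι]
    (f : ι → ℝ) (j : ι) {C : ℝ} (hC : ∀ i, i ≠ j → f i ≤ C) :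
    ∑ i, f i ≤ f j + ((Fintype.card ι : ℝ) - 1) * C := by
  classical
  rw [← Finset.add_sum_erase _ _ (Finset.mem_univ j)]
  have hcard : ((Finset.univ.erase j).card : ℝ) = (Fintype.card ι : ℝ) - 1 := by
    rw [Finset.card_erase_of_mem (Finset.mem_univ j), Finset.card_univ,
      Nat.cast_sub (Fintype.card_pos_iff.mpr ⟨j⟩), Nat.cast_one]
  calc f j + ∑ i ∈ Finset.univ.erase j, f i
      ≤ f j + ∑ _i ∈ Finset.univ.erase j, C :=
        add_le_add_right (Finset.sum_le_sum fun i hi => hC i (Finset.ne_of_mem_erase hi)) _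
    _ = f j + ((Fintype.card ι : ℝ) - 1) * C := by
        rw [Finset.sum_const, nsmul_eq_mul, hcard]

theorem IsCompact.norm_le_iSup_norm {α E : Type*} [TopologicalSpace α]
    [SeminormedAddCommGroup E] {K : Set α} (hK : IsCompact K) {f : α → E}
    (hf : ContinuousOn f K) {s : α} (hs : s ∈ K) :
    ‖f s‖ ≤ ⨆ t : K, ‖f t‖ := by
  have hbdd : BddAbove (range fun t : K => ‖f t‖) := by
    simpa only [image_eq_range] using (hK.image_of_continuousOn hf.norm).bddAbove
  exact le_ciSup hbdd ⟨s, hs⟩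

theorem Orthonormal.exists_orthonormalBasis_coe_eq {ι E : Type*} [Fintype ι]
    [NormedAddCommGroup E] [InnerProductSpace ℝ E] [FiniteDimensional ℝ E] {v : ι → E}
    (hv : Orthonormal ℝ v) (hcard : Fintype.card ι = Module.finrank ℝ E) :
    ∃ b : OrthonormalBasis ι ℝ E, ⇑b = v :=
  ⟨.mk hv (hv.linearIndependent.span_eq_top_of_card_eq_finrank' hcard).ge,
    OrthonormalBasis.coe_mk _ _⟩

section Eigenbasis

variable {E : Type*} [NormedAddCommGroup E] [InnerProductSpace ℝ E] [FiniteDimensional ℝ E]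
  {ι : Type*} [Fintype ι]

theorem OrthonormalBasis.ring_inverse_apply_of_apply_eq_smul (b : OrthonormalBasis ι ℝ E)
    {A : E →L[ℝ] E} {μ : ι → ℝ} (hA : ∀ i, A (b i) = μ i • b i) (hμ : ∀ i, μ i ≠ 0)
    (y : E) : Ring.inverse A y = ∑ i, (⟪b i, y⟫ / μ i) • b i := by
  have hsolve : ∀ y, A (∑ i, (⟪b i, y⟫ / μ i) • b i) = y := by
    intro y
    simp only [map_sum, map_smul, hA, smul_smul, div_mul_cancel₀ _ (hμ _), b.sum_repr']
  have hsurj : Function.Surjective A := fun y => ⟨_, hsolve y⟩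
  have hunit : IsUnit A := ContinuousLinearMap.isUnit_iff_bijective.mpr
    ⟨(LinearMap.injective_iff_surjective (f := (A : E →ₗ[ℝ] E))).mpr hsurj, hsurj⟩
  conv_lhs => rw [← hsolve y]
  change (Ring.inverse A * A) _ = _
  rw [Ring.inverse_mul_cancel A hunit]
  rfl

variable {X : Type*} [NormedAddCommGroup X] [InnerProductSpace ℝ X] [CompleteSpace X]

theorem ContinuousLinearMap.norm_adjoint_apply_of_comp_adjoint_apply_eq_smul
    (T : X →L[ℝ] E) {v : E} {μ : ℝ} (hv : (T ∘L T†) v = μ • v) (hv1 : ‖v‖ = 1) :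
    ‖(T†) v‖ = Real.sqrt μ := by
  have hsq : ‖(T†) v‖ ^ 2 = μ := by
    rw [← real_inner_self_eq_norm_sq, adjoint_inner_left, ← comp_apply, hv,
      real_inner_smul_right, real_inner_self_eq_norm_sq, hv1, one_pow, mul_one]
  rw [← hsq, Real.sqrt_sq (norm_nonneg _)]

theorem ContinuousLinearMap.norm_adjoint_ring_inverse_comp_adjoint_apply_le
    (T : X →L[ℝ] E) (b : OrthonormalBasis ι ℝ E) {μ : ι → ℝ}
    (hb : ∀ i, (T ∘L T†) (b i) = μ i • b i) (hμ : ∀ i, 0 < μ i) (y : E) :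
    ‖(T†) (Ring.inverse (T ∘L T†) y)‖ ≤ ∑ i, |⟪y, b i⟫| / Real.sqrt (μ i) := by
  rw [b.ring_inverse_apply_of_apply_eq_smul hb (fun i => (hμ i).ne'), map_sum]
  refine (norm_sum_le _ _).trans (Finset.sum_le_sum fun i _ => le_of_eq ?_)
  rw [map_smul, norm_smul, T.norm_adjoint_apply_of_comp_adjoint_apply_eq_smul (hb i)
    (b.norm_eq_one i), Real.norm_eq_abs, abs_div, abs_of_pos (hμ i), real_inner_comm,
    div_mul_eq_mul_div, mul_div_assoc, Real.sqrt_div_self', mul_one_div]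

end Eigenbasis

theorem PLE_velocity_estimate_general
    {X : Type*} [NormedAddCommGroup X] [InnerProductSpace ℝ X] [CompleteSpace X]
    {n : ℕ} [NeZero n] (F : X → EuclideanSpace ℝ (Fin n))
    (I : Set ℝ) (hIsub : I ⊆ Ico 0 1)
    -- a C¹ curve γ on [0,1]
    (γ' : ℝ → EuclideanSpace ℝ (Fin n))
    (hγ'c : ContinuousOn γ' (Icc 0 1))
    -- a solution u of the PLE on I, with derivative u'
    (u : ℝ → X) (u' : ℝ → X)
    (hPLE : ∀ s ∈ I, u' s = (ContinuousLinearMap.adjoint (fderiv ℝ F (u s)))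
        (Ring.inverse (gram F (u s)) (γ' s)))
    -- continuous orthonormal eigenvector family with ordered eigenvalues
    (lam : ℝ → Fin n → ℝ) (z : ℝ → Fin n → EuclideanSpace ℝ (Fin n))
    (horth : ∀ s ∈ I, Orthonormal ℝ (z s))
    (heig : ∀ s ∈ I, ∀ i : Fin n, gram F (u s) (z s i) = lam s i • z s i)
    (hpos : ∀ s ∈ I, 0 < lam s 0)
    (lam0 : ℝ) (hlam0 : 0 < lam0)
    (hA : ∀ s ∈ I, ∀ i : Fin n, i ≠ 0 → lam0 ≤ lam s i) :
    ∀ s ∈ I, ‖u' s‖ ≤ |⟪γ' s, z s 0⟫| / Real.sqrt (lam s 0) +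
      ((n : ℝ) - 1) * (⨆ t : Icc (0:ℝ) 1, ‖γ' (t : ℝ)‖) / Real.sqrt lam0 := by
  intro s hs
  set M := ⨆ t : Icc (0:ℝ) 1, ‖γ' (t : ℝ)‖
  obtain ⟨b, hb⟩ := (horth s hs).exists_orthonormalBasis_coe_eq (by simp)
  have hlam : ∀ i, 0 < lam s i := fun i =>
    if hi : i = 0 then hi ▸ hpos s hs else hlam0.trans_le (hA s hs i hi)
  have hγ'_le : ‖γ' s‖ ≤ M :=
    isCompact_Icc.norm_le_iSup_norm hγ'c (Ico_subset_Icc_self (hIsub hs))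
  have hcoeff_le : ∀ i, |⟪γ' s, b i⟫| ≤ M := fun i =>
    (abs_real_inner_le_norm _ _).trans (by rw [b.norm_eq_one, mul_one]; exact hγ'_le)
  have hterm_le : ∀ i ≠ 0, |⟪γ' s, b i⟫| / Real.sqrt (lam s i) ≤ M / Real.sqrt lam0 :=
    fun i hi => div_le_div₀ ((norm_nonneg _).trans hγ'_le) (hcoeff_le i)
      (Real.sqrt_pos.mpr hlam0) (Real.sqrt_le_sqrt (hA s hs i hi))
  rw [hPLE s hs, mul_div_assoc, ← hb]
  calc ‖((fderiv ℝ F (u s))†) (Ring.inverse (gram F (u s)) (γ' s))‖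
      ≤ ∑ i, |⟪γ' s, b i⟫| / Real.sqrt (lam s i) :=
        (fderiv ℝ F (u s)).norm_adjoint_ring_inverse_comp_adjoint_apply_le b
          (hb ▸ heig s hs) hlam (γ' s)
    _ ≤ _ := by
        simpa only [Fintype.card_fin] using Finset.sum_le_add_mul_of_forall_ne_le _ 0 hterm_le

/-- **Lemma (basic estimate along the PLE).** If `u` solves the path-lifting
equation on an interval `I ⊆ [0,1)` with `λ₁(s) > 0` and `λ_i(s) ≥ λ₀ > 0` for
`i ≥ 2`, then `‖u'(s)‖ ≤ |a₁(s)|/√λ₁(s) + C̄` on `I`, where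
`C̄ = (n-1)·(sup_{[0,1]} ‖γ'‖)/√λ₀` and `a₁(s) = ⟪γ'(s), z₁(s)⟫`. -/
theorem PLE_velocity_estimate
    {X : Type*} [NormedAddCommGroup X] [InnerProductSpace ℝ X] [CompleteSpace X]
    {n : ℕ} [NeZero n] (F : X → EuclideanSpace ℝ (Fin n)) (hF : ContDiff ℝ 2 F)
    (I : Set ℝ) (hIsub : I ⊆ Ico 0 1) (hIord : I.OrdConnected)
    -- a C¹ curve γ on [0,1]
    (γ γ' : ℝ → EuclideanSpace ℝ (Fin n))
    (hγ : ∀ s ∈ Icc (0:ℝ) 1, HasDerivWithinAt γ (γ' s) (Icc 0 1) s)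
    (hγ'c : ContinuousOn γ' (Icc 0 1))
    -- a solution u of the PLE on I, with derivative u'
    (u : ℝ → X) (u' : ℝ → X)
    (husol : ∀ s ∈ I, HasDerivWithinAt u (u' s) I s)
    (hPLE : ∀ s ∈ I, u' s = (ContinuousLinearMap.adjoint (fderiv ℝ F (u s)))
        (Ring.inverse (gram F (u s)) (γ' s)))
    -- continuous orthonormal eigenvector family with ordered eigenvalues
    (lam : ℝ → Fin n → ℝ) (z : ℝ → Fin n → EuclideanSpace ℝ (Fin n))
    (horth : ∀ s ∈ I, Orthonormal ℝ (z s))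
    (heig : ∀ s ∈ I, ∀ i : Fin n, gram F (u s) (z s i) = lam s i • z s i)
    (hmono : ∀ s ∈ I, Monotone (lam s))
    (hpos : ∀ s ∈ I, 0 < lam s 0)
    (lam0 : ℝ) (hlam0 : 0 < lam0)
    (hA : ∀ s ∈ I, ∀ i : Fin n, i ≠ 0 → lam0 ≤ lam s i) :
    ∀ s ∈ I, ‖u' s‖ ≤ |⟪γ' s, z s 0⟫| / Real.sqrt (lam s 0) +
      ((n : ℝ) - 1) * (⨆ t : Icc (0:ℝ) 1, ‖γ' (t : ℝ)‖) / Real.sqrt lam0 :=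
  PLE_velocity_estimate_general F I hIsub γ' hγ'c u u' hPLE lam z horth heig hpos lam0 hlam0 hA
end

section
/- Let u : I → X be a solution of the PLE on a bounded interval I ⊆ [0,1) with λ₁(s) > 0 on I, γ of class C², λ_i(s) ≥ λ₀ > 0 for all i = 2,…,n and s ∈ I, and suppose λ₁ and z₁ are differentiable on I and |⟨z, d²F|_{u(s)}(v,w)⟩| ≤ C‖v‖‖w‖ for all unit z ∈ ℝⁿ, all v,w ∈ X and all s ∈ I. Then for every s ∈ I: dλ₁/ds(s) = 2a₁(s)h(s) + 2f(s)√λ₁(s), and equivalently d(√λ₁)/ds(s) = (a₁(s)/√λ₁(s))h(s) + f(s); moreover there exists C₀ ≥ 0 with |dλ₁/ds(s)| ≤ C₀ for all s ∈ I, and both f and λ₁ are bounded on I. -/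
open Set
open scoped RealInnerProductSpace

/-- The second Fréchet derivative `d²F|_u` as a bilinear map `X × X → ℝⁿ`. -/
noncomputable def d2F {X : Type*} [NormedAddCommGroup X] [InnerProductSpace ℝ X]
    [CompleteSpace X] {n : ℕ} (F : X → EuclideanSpace ℝ (Fin n)) (u : X) :
    X →L[ℝ] X →L[ℝ] EuclideanSpace ℝ (Fin n) :=
  fderiv ℝ (fun x => fderiv ℝ F x) u

/-!
Hellmann–Feynman: since `‖z₁‖ = 1` on `I`, `z₁'` is orthogonal to `z₁`, so differentiating
`λ₁ = ⟪z₁, G(u) z₁⟫` only sees the derivative `d²F(u') ∘ dF* + dF ∘ d²F(u')*` of the Gramian, and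
`dλ₁/ds = 2⟪z₁, d²F(u')(dF* z₁)⟫` with `dF* z₁ = √λ₁ v₁`. Expanding `G⁻¹ γ'` in the eigenbasis turns
the PLE into `u' = ∑ (aᵢ/√λᵢ) vᵢ`; the term `i = 1` gives `2 a₁ h`, the others `2 f √λ₁`.

The `vᵢ` are unit vectors, so `|h| ≤ C` and `|f| ≤ (n - 1) C sup ‖γ'‖ / √λ₀`, whence
`|dλ₁/ds| ≤ K + L √λ₁`. This makes `√(λ₁ + 1)` Lipschitz (unlike `√λ₁`, whose derivative blows up
as `λ₁ → 0`), so `λ₁` is bounded on the bounded interval `I`, and then so is `dλ₁/ds`.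
-/

open ContinuousLinearMap

section Adjoint

variable {E F : Type*} [NormedAddCommGroup E] [InnerProductSpace ℝ E] [CompleteSpace E]
  [NormedAddCommGroup F] [InnerProductSpace ℝ F] [CompleteSpace F]

theorem HasDerivWithinAt.adjoint {A : ℝ → E →L[ℝ] F} {A' : E →L[ℝ] F} {I : Set ℝ} {s : ℝ}
    (hA : HasDerivWithinAt A A' I s) :
    HasDerivWithinAt (fun t => ContinuousLinearMap.adjoint (A t))
      (ContinuousLinearMap.adjoint A') I s :=
  (ContinuousLinearMap.adjoint : (E →L[ℝ] F) ≃ₗᵢ⋆[ℝ] _).toContinuousLinearEquiv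
    |>.toContinuousLinearMap.hasFDerivAt.comp_hasDerivWithinAt s hA

theorem HasDerivWithinAt.self_comp_adjoint {A : ℝ → E →L[ℝ] F} {A' : E →L[ℝ] F} {I : Set ℝ}
    {s : ℝ} (hA : HasDerivWithinAt A A' I s) :
    HasDerivWithinAt (fun t => A t ∘L ContinuousLinearMap.adjoint (A t))
      (A' ∘L ContinuousLinearMap.adjoint (A s) + A s ∘L ContinuousLinearMap.adjoint A') I s :=
  hA.clm_comp hA.adjoint

theorem inner_comp_adjoint_add_comp_adjoint_apply (A A' : E →L[ℝ] F) (y : F) :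
    ⟪y, (A' ∘L adjoint A + A ∘L adjoint A') y⟫ = 2 * ⟪y, A' (adjoint A y)⟫ := by
  rw [add_apply, inner_add_right, comp_apply, comp_apply, ← adjoint_inner_left A,
    adjoint_inner_right, real_inner_comm y]
  ring

theorem norm_adjoint_apply_eq_sqrt (A : E →L[ℝ] F) {z : F} (hz : ‖z‖ = 1) {lam : ℝ}
    (heig : (A ∘L adjoint A) z = lam • z) :
    ‖adjoint A z‖ = √lam := by
  rw [← Real.sqrt_sq (norm_nonneg _), ← real_inner_self_eq_norm_sq, adjoint_inner_left,
    ← comp_apply, heig, real_inner_smul_right, real_inner_self_eq_norm_sq, hz, one_pow, mul_one]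

theorem norm_inv_sqrt_smul_adjoint_apply {A : E →L[ℝ] F} {z : F} (hz : ‖z‖ = 1) {lam : ℝ}
    (hlam : 0 < lam) (heig : (A ∘L adjoint A) z = lam • z) :
    ‖(√lam)⁻¹ • adjoint A z‖ = 1 := by
  rw [norm_smul, norm_adjoint_apply_eq_sqrt A hz heig, norm_inv, Real.norm_of_nonneg
    (Real.sqrt_nonneg _), inv_mul_cancel₀ (Real.sqrt_pos.mpr hlam).ne']

end Adjoint

theorem hasDerivWithinAt_eigenvalue_of_unit_eigenvector {E : Type*} [NormedAddCommGroup E]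
    [InnerProductSpace ℝ E] {G : ℝ → E →L[ℝ] E} {G' : E →L[ℝ] E} {z : ℝ → E} {z' : E}
    {lam : ℝ → ℝ} {I : Set ℝ} {s : ℝ} (hs : s ∈ I) (hG : HasDerivWithinAt G G' I s)
    (hz : HasDerivWithinAt z z' I s) (hsymm : (G s : E →ₗ[ℝ] E).IsSymmetric)
    (hnorm : ∀ t ∈ I, ‖z t‖ = 1) (heig : ∀ t ∈ I, G t (z t) = lam t • z t) :
    HasDerivWithinAt lam ⟪z s, G' (z s)⟫ I s := by
  by_cases hacc : AccPt s (Filter.principal I)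
  swap
  · exact HasFDerivWithinAt.of_not_accPt hacc
  have hquad : ∀ t ∈ I, ⟪z t, G t (z t)⟫ = lam t := by
    intro t ht
    rw [heig t ht, real_inner_smul_right, real_inner_self_eq_norm_sq, hnorm t ht, one_pow, mul_one]
  have hunit : ∀ t ∈ I, ⟪z t, z t⟫ = (1 : ℝ) := by
    intro t ht
    rw [real_inner_self_eq_norm_sq, hnorm t ht, one_pow]
  -- `‖z‖ = 1` on `I` forces `z' ⟂ z s`, which kills the terms involving `z'`.
  have horth : ⟪z s, z'⟫ + ⟪z', z s⟫ = 0 :=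
    hacc.uniqueDiffWithinAt.eq_deriv _ (hz.inner ℝ hz)
      ((hasDerivWithinAt_const s I 1).congr hunit (hunit s hs))
  have hderiv := (hz.inner ℝ (hG.clm_apply hz)).congr_of_mem (fun t ht => (hquad t ht).symm) hs
  have hGsymm : ⟪G s (z s), z'⟫ = ⟪z s, G s z'⟫ := hsymm (z s) z'
  refine hderiv.congr_deriv ?_
  rw [inner_add_right, ← hGsymm, heig s hs, real_inner_smul_left,
    real_inner_smul_right]
  linear_combination lam s * horth

theorem Orthonormal.sum_inner_smul_eq_self {ι E : Type*} [Fintype ι] [NormedAddCommGroup E]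
    [InnerProductSpace ℝ E] [FiniteDimensional ℝ E] {z : ι → E} (hz : Orthonormal ℝ z)
    (hcard : Fintype.card ι = Module.finrank ℝ E) (x : E) :
    ∑ i, ⟪z i, x⟫ • z i = x := by
  simpa using (OrthonormalBasis.mk hz
    (hz.linearIndependent.span_eq_top_of_card_eq_finrank' hcard).ge).sum_repr' x

theorem Ring.inverse_apply_eq_sum_of_orthonormal_eigenvectors {ι E : Type*} [Fintype ι]
    [NormedAddCommGroup E] [InnerProductSpace ℝ E] [FiniteDimensional ℝ E] {z : ι → E}
    (hz : Orthonormal ℝ z) (hcard : Fintype.card ι = Module.finrank ℝ E) {G : E →L[ℝ] E}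
    {lam : ι → ℝ} (hlam : ∀ i, lam i ≠ 0) (heig : ∀ i, G (z i) = lam i • z i) (y : E) :
    Ring.inverse G y = ∑ i, ((lam i)⁻¹ * ⟪z i, y⟫) • z i := by
  have hsolve : ∀ y, G (∑ i, ((lam i)⁻¹ * ⟪z i, y⟫) • z i) = y := by
    intro y
    simp only [map_sum, map_smul, heig, smul_smul]
    conv_rhs => rw [← hz.sum_inner_smul_eq_self hcard y]
    refine Finset.sum_congr rfl fun i _ => ?_
    rw [mul_comm, ← mul_assoc, mul_inv_cancel₀ (hlam i), one_mul]
  have hsurj : Function.Surjective G := fun y => ⟨_, hsolve y⟩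
  have hunit : IsUnit G := isUnit_iff_bijective.mpr
    ⟨(LinearMap.injective_iff_surjective (f := (G : E →ₗ[ℝ] E))).mpr hsurj, hsurj⟩
  calc Ring.inverse G y = (Ring.inverse G * G) (∑ i, ((lam i)⁻¹ * ⟪z i, y⟫) • z i) := by
        rw [mul_apply_eq_comp, hsolve]
    _ = _ := by rw [Ring.inverse_mul_cancel G hunit, one_apply_eq_self]

section Gramian

variable {X E : Type*} [NormedAddCommGroup X] [InnerProductSpace ℝ X] [CompleteSpace X]
  [NormedAddCommGroup E] [InnerProductSpace ℝ E] [FiniteDimensional ℝ E]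
  {ι : Type*} [Fintype ι] {z : ι → E} {lam : ι → ℝ} {v : ι → X}

theorem adjoint_apply_ring_inverse_comp_adjoint (A : X →L[ℝ] E) (hz : Orthonormal ℝ z)
    (hcard : Fintype.card ι = Module.finrank ℝ E) (hlam : ∀ i, 0 < lam i)
    (heig : ∀ i, (A ∘L adjoint A) (z i) = lam i • z i)
    (hv : ∀ i, v i = (√(lam i))⁻¹ • adjoint A (z i)) (y : E) :
    adjoint A (Ring.inverse (A ∘L adjoint A) y) = ∑ i, (⟪y, z i⟫ / √(lam i)) • v i := by
  rw [Ring.inverse_apply_eq_sum_of_orthonormal_eigenvectors hz hcard (fun i => (hlam i).ne')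
    heig, map_sum]
  refine Finset.sum_congr rfl fun i _ => ?_
  rw [map_smul, hv, smul_smul, real_inner_comm]
  congr 1
  field_simp
  rw [Real.sq_sqrt (hlam i).le]

theorem inner_apply_adjoint_apply_ring_inverse_comp_adjoint [DecidableEq ι] (A : X →L[ℝ] E)
    (B : X →L[ℝ] X →L[ℝ] E) (hz : Orthonormal ℝ z)
    (hcard : Fintype.card ι = Module.finrank ℝ E) (hlam : ∀ i, 0 < lam i)
    (heig : ∀ i, (A ∘L adjoint A) (z i) = lam i • z i)
    (hv : ∀ i, v i = (√(lam i))⁻¹ • adjoint A (z i)) {y : E} {a : ι → ℝ}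
    (ha : ∀ i, a i = ⟪y, z i⟫) (i₀ : ι) :
    ⟪z i₀, B (adjoint A (Ring.inverse (A ∘L adjoint A) y)) (adjoint A (z i₀))⟫
      = a i₀ * ⟪z i₀, B (v i₀) (v i₀)⟫
        + (∑ i ∈ Finset.univ.filter (fun i => i ≠ i₀),
            a i / √(lam i) * ⟪z i₀, B (v i) (v i₀)⟫) * √(lam i₀) := by
  have hsqrt_ne : √(lam i₀) ≠ 0 := (Real.sqrt_pos.mpr (hlam i₀)).ne'
  have hAz : adjoint A (z i₀) = √(lam i₀) • v i₀ := by
    rw [hv, smul_smul, mul_inv_cancel₀ hsqrt_ne, one_smul]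
  rw [adjoint_apply_ring_inverse_comp_adjoint A hz hcard hlam heig hv, hAz, map_smul,
    inner_smul_right, map_sum, sum_apply, inner_sum, Finset.filter_ne',
    ← Finset.add_sum_erase _ _ (Finset.mem_univ i₀)]
  simp only [map_smul, smul_apply, inner_smul_right, ← ha]
  field_simp

end Gramian

section PathLifting

variable {X : Type*} [NormedAddCommGroup X] [InnerProductSpace ℝ X] [CompleteSpace X]
  {n : ℕ} {F : X → EuclideanSpace ℝ (Fin n)}

theorem hasDerivWithinAt_gram (hF : ContDiff ℝ 2 F) {u : ℝ → X} {u' : X} {I : Set ℝ} {s : ℝ}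
    (hu : HasDerivWithinAt u u' I s) :
    HasDerivWithinAt (fun t => gram F (u t))
      (d2F F (u s) u' ∘L adjoint (fderiv ℝ F (u s))
        + fderiv ℝ F (u s) ∘L adjoint (d2F F (u s) u')) I s := by
  have hF' : HasFDerivAt (fderiv ℝ F) (d2F F (u s)) (u s) :=
    ((hF.fderiv_right one_add_one_eq_two.le).differentiable one_ne_zero (u s)).hasFDerivAt
  exact (hF'.comp_hasDerivWithinAt s hu).self_comp_adjoint

theorem hasDerivWithinAt_gram_eigenvalue (hF : ContDiff ℝ 2 F) {u : ℝ → X} {u' : X}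
    {z : ℝ → EuclideanSpace ℝ (Fin n)} {z' : EuclideanSpace ℝ (Fin n)} {lam : ℝ → ℝ}
    {I : Set ℝ} {s : ℝ} (hs : s ∈ I) (hu : HasDerivWithinAt u u' I s)
    (hz : HasDerivWithinAt z z' I s) (hnorm : ∀ t ∈ I, ‖z t‖ = 1)
    (heig : ∀ t ∈ I, gram F (u t) (z t) = lam t • z t) :
    HasDerivWithinAt lam (2 * ⟪z s, d2F F (u s) u' (adjoint (fderiv ℝ F (u s)) (z s))⟫) I s := by
  have := hasDerivWithinAt_eigenvalue_of_unit_eigenvector hs (hasDerivWithinAt_gram hF hu) hz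
    (isPositive_self_comp_adjoint _).isSymmetric hnorm heig
  rwa [inner_comp_adjoint_add_comp_adjoint_apply] at this

theorem hasDerivWithinAt_eigenvalue_of_pathLifting (hF : ContDiff ℝ 2 F) {u : ℝ → X}
    {γ' : EuclideanSpace ℝ (Fin n)} {lam : ℝ → Fin n → ℝ} {z : ℝ → Fin n → EuclideanSpace ℝ (Fin n)}
    {z' : EuclideanSpace ℝ (Fin n)} {a : Fin n → ℝ} {v : Fin n → X} {I : Set ℝ} {s : ℝ}
    (hs : s ∈ I) (i₀ : Fin n)
    (hu : HasDerivWithinAt u (adjoint (fderiv ℝ F (u s)) (Ring.inverse (gram F (u s)) γ')) I s)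
    (hz : HasDerivWithinAt (fun t => z t i₀) z' I s) (horth : ∀ t ∈ I, Orthonormal ℝ (z t))
    (heig : ∀ t ∈ I, ∀ i, gram F (u t) (z t i) = lam t i • z t i) (hlam : ∀ i, 0 < lam s i)
    (ha : ∀ i, a i = ⟪γ', z s i⟫)
    (hv : ∀ i, v i = (√(lam s i))⁻¹ • adjoint (fderiv ℝ F (u s)) (z s i)) :
    HasDerivWithinAt (fun t => lam t i₀)
      (2 * a i₀ * ⟪z s i₀, d2F F (u s) (v i₀) (v i₀)⟫
        + 2 * (∑ i ∈ Finset.univ.filter (fun i => i ≠ i₀),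
            a i / √(lam s i) * ⟪z s i₀, d2F F (u s) (v i) (v i₀)⟫) * √(lam s i₀)) I s := by
  refine (hasDerivWithinAt_gram_eigenvalue hF hs hu hz (fun t ht => (horth t ht).1 i₀)
    (fun t ht => heig t ht i₀)).congr_deriv ?_
  rw [gram, inner_apply_adjoint_apply_ring_inverse_comp_adjoint _ _ (horth s hs) (by simp) hlam
    (heig s hs) hv ha]
  ring

end PathLifting

theorem abs_sum_div_sqrt_mul_le {ι : Type*} (S : Finset ι) {a lam b : ι → ℝ} {M C lam₀ : ℝ}
    (hlam₀ : 0 < lam₀) (ha : ∀ i ∈ S, |a i| ≤ M) (hlam : ∀ i ∈ S, lam₀ ≤ lam i)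
    (hb : ∀ i ∈ S, |b i| ≤ C) :
    |∑ i ∈ S, a i / √(lam i) * b i| ≤ S.card * (M / √lam₀ * C) := by
  refine (Finset.abs_sum_le_sum_abs _ _).trans ?_
  rw [← nsmul_eq_mul]
  refine Finset.sum_le_card_nsmul _ _ _ fun i hi => ?_
  have hsqrt : √lam₀ ≤ √(lam i) := Real.sqrt_le_sqrt (hlam i hi)
  have hsqrt₀ : 0 < √lam₀ := Real.sqrt_pos.mpr hlam₀
  rw [abs_mul, abs_div, abs_of_pos (hsqrt₀.trans_le hsqrt)]
  have hM : 0 ≤ M := (abs_nonneg _).trans (ha i hi)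
  exact mul_le_mul (div_le_div₀ hM (ha i hi) hsqrt₀ hsqrt) (hb i hi) (abs_nonneg _)
    (div_nonneg hM hsqrt₀.le)

theorem Convex.exists_le_of_abs_hasDerivWithinAt_le_add_mul_sqrt {g g' : ℝ → ℝ} {I : Set ℝ}
    {K L : ℝ} (hI : Convex ℝ I) (hIb : Bornology.IsBounded I) (hK : 0 ≤ K) (hL : 0 ≤ L)
    (hg0 : ∀ t ∈ I, 0 ≤ g t) (hg : ∀ t ∈ I, HasDerivWithinAt g (g' t) I t)
    (hg' : ∀ t ∈ I, |g' t| ≤ K + L * √(g t)) :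
    ∃ M ≥ 0, ∀ t ∈ I, g t ≤ M ∧ |g' t| ≤ K + L * √M := by
  rcases I.eq_empty_or_nonempty with rfl | ⟨t₀, ht₀⟩
  · exact ⟨0, le_rfl, by simp⟩
  set p : ℝ → ℝ := fun t => √(g t + 1)
  have hp_pos : ∀ t ∈ I, 1 ≤ p t := fun t ht =>
    Real.one_le_sqrt.mpr (by linarith [hg0 t ht])
  have hp : ∀ t ∈ I, HasDerivWithinAt p (g' t / (2 * p t)) I t := fun t ht =>
    ((hg t ht).add_const 1).sqrt (by linarith [hg0 t ht])
  have hp' : ∀ t ∈ I, ‖g' t / (2 * p t)‖ ≤ (K + L) / 2 := by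
    intro t ht
    have hsqrt : √(g t) ≤ p t := Real.sqrt_le_sqrt (by linarith)
    have hp0 := hp_pos t ht
    have h2p : 0 < 2 * p t := by linarith
    rw [Real.norm_eq_abs, abs_div, abs_of_pos h2p, div_le_div_iff₀ h2p two_pos]
    nlinarith [hg' t ht, mul_le_mul_of_nonneg_left hsqrt hL, mul_le_mul_of_nonneg_left hp0 hK]
  refine ⟨(p t₀ + (K + L) / 2 * Metric.diam I) ^ 2, sq_nonneg _, fun t ht => ?_⟩
  have hlip := hI.norm_image_sub_le_of_norm_hasDerivWithin_le hp hp' ht₀ ht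
  rw [← dist_eq_norm, ← dist_eq_norm] at hlip
  have hdist := hlip.trans (mul_le_mul_of_nonneg_left (Metric.dist_le_diam_of_mem hIb ht ht₀)
    (by positivity))
  have hpt : p t ≤ p t₀ + (K + L) / 2 * Metric.diam I := by
    linarith [(abs_le.mp (Real.dist_eq (p t) (p t₀) ▸ hdist)).2]
  have hgt : g t ≤ (p t₀ + (K + L) / 2 * Metric.diam I) ^ 2 :=
    calc g t ≤ p t ^ 2 := by rw [Real.sq_sqrt (by linarith [hg0 t ht])]; linarith
      _ ≤ _ := pow_le_pow_left₀ (by linarith [hp_pos t ht]) hpt 2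
  exact ⟨hgt, (hg' t ht).trans (by gcongr)⟩

theorem least_eigenvalue_derivative_general
    {X : Type*} [NormedAddCommGroup X] [InnerProductSpace ℝ X] [CompleteSpace X]
    {n : ℕ} [NeZero n] (F : X → EuclideanSpace ℝ (Fin n)) (hF : ContDiff ℝ 2 F)
    (I : Set ℝ) (hIsub : I ⊆ Ico 0 1) (hIord : I.OrdConnected)
    -- a C² curve γ on [0,1]
    (γ' γ'' : ℝ → EuclideanSpace ℝ (Fin n))
    (hγ' : ∀ s ∈ Icc (0:ℝ) 1, HasDerivWithinAt γ' (γ'' s) (Icc 0 1) s)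
    -- a solution u of the PLE on I, with derivative u'
    (u : ℝ → X) (u' : ℝ → X)
    (husol : ∀ s ∈ I, HasDerivWithinAt u (u' s) I s)
    (hPLE : ∀ s ∈ I, u' s = (ContinuousLinearMap.adjoint (fderiv ℝ F (u s)))
        (Ring.inverse (gram F (u s)) (γ' s)))
    -- orthonormal eigenvector family with ordered eigenvalues
    (lam : ℝ → Fin n → ℝ) (z : ℝ → Fin n → EuclideanSpace ℝ (Fin n))
    (horth : ∀ s ∈ I, Orthonormal ℝ (z s))
    (heig : ∀ s ∈ I, ∀ i : Fin n, gram F (u s) (z s i) = lam s i • z s i)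
    (hpos : ∀ s ∈ I, 0 < lam s 0)
    (lam0 : ℝ) (hlam0 : 0 < lam0)
    (hA : ∀ s ∈ I, ∀ i : Fin n, i ≠ 0 → lam0 ≤ lam s i)
    -- λ₁ and z₁ are differentiable on I
    (hzdiff : ∀ s ∈ I, DifferentiableWithinAt ℝ (fun t => z t 0) I s)
    -- uniform bound on the second differential along u
    (C : ℝ) (hC : 0 < C)
    (hC2 : ∀ s ∈ I, ∀ zz : EuclideanSpace ℝ (Fin n), ‖zz‖ = 1 →
        ∀ v w : X, |⟪zz, d2F F (u s) v w⟫| ≤ C * ‖v‖ * ‖w‖)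
    -- the coefficients a_i, the normalized switching functions v_i, and h, f
    (a : Fin n → ℝ → ℝ) (ha : ∀ s ∈ I, ∀ i : Fin n, a i s = ⟪γ' s, z s i⟫)
    (v : Fin n → ℝ → X)
    (hv : ∀ s ∈ I, ∀ i : Fin n, v i s = (Real.sqrt (lam s i))⁻¹ •
        (ContinuousLinearMap.adjoint (fderiv ℝ F (u s))) (z s i))
    (h f : ℝ → ℝ)
    (hh : ∀ s ∈ I, h s = ⟪z s 0, d2F F (u s) (v 0 s) (v 0 s)⟫)
    (hf : ∀ s ∈ I, f s = ∑ i ∈ Finset.univ.filter (fun i : Fin n => i ≠ 0),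
        (a i s / Real.sqrt (lam s i)) * ⟪z s 0, d2F F (u s) (v i s) (v 0 s)⟫) :
    (∀ s ∈ I, HasDerivWithinAt (fun t => lam t 0)
        (2 * a 0 s * h s + 2 * f s * Real.sqrt (lam s 0)) I s) ∧
    (∀ s ∈ I, HasDerivWithinAt (fun t => Real.sqrt (lam t 0))
        (a 0 s / Real.sqrt (lam s 0) * h s + f s) I s) ∧
    (∃ C₀ ≥ (0:ℝ), ∀ s ∈ I,
        |2 * a 0 s * h s + 2 * f s * Real.sqrt (lam s 0)| ≤ C₀) ∧
    (∃ Cf ≥ (0:ℝ), ∀ s ∈ I, |f s| ≤ Cf) ∧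
    (∃ CL ≥ (0:ℝ), ∀ s ∈ I, lam s 0 ≤ CL) := by
  have hlam : ∀ s ∈ I, ∀ i, 0 < lam s i := fun s hs i => by
    rcases eq_or_ne i 0 with rfl | hi
    exacts [hpos s hs, hlam0.trans_le (hA s hs i hi)]
  have hderiv : ∀ s ∈ I, HasDerivWithinAt (fun t => lam t 0)
      (2 * a 0 s * h s + 2 * f s * √(lam s 0)) I s := fun s hs => by
    have hu := husol s hs
    rw [hPLE s hs] at hu
    rw [hh s hs, hf s hs]
    exact hasDerivWithinAt_eigenvalue_of_pathLifting (a := (a · s)) (v := (v · s)) hF hs 0 hu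
      (hzdiff s hs).hasDerivWithinAt horth heig (hlam s hs) (ha s hs) (hv s hs)
  have hsqrt_deriv : ∀ s ∈ I, HasDerivWithinAt (fun t => √(lam t 0))
      (a 0 s / √(lam s 0) * h s + f s) I s := fun s hs => by
    refine ((hderiv s hs).sqrt (hpos s hs).ne').congr_deriv ?_
    have hsqrt_ne := (Real.sqrt_pos.mpr (hpos s hs)).ne'
    field_simp
  obtain ⟨M, hM⟩ := isCompact_Icc.exists_bound_of_continuousOn
    fun t ht => (hγ' t ht).continuousWithinAt
  have hM₀ : 0 ≤ M := (norm_nonneg _).trans (hM 0 (left_mem_Icc.mpr zero_le_one))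
  have ha_le : ∀ s ∈ I, ∀ i, |a i s| ≤ M := fun s hs i =>
    calc |a i s| ≤ ‖γ' s‖ * ‖z s i‖ := ha s hs i ▸ abs_real_inner_le_norm _ _
      _ ≤ M := by rw [(horth s hs).1 i, mul_one]; exact hM s (Ico_subset_Icc_self (hIsub hs))
  have hd2F_le : ∀ s ∈ I, ∀ i j, |⟪z s 0, d2F F (u s) (v i s) (v j s)⟫| ≤ C := by
    intro s hs i j
    simpa [hv s hs, norm_inv_sqrt_smul_adjoint_apply ((horth s hs).1 _) (hlam s hs _)
      (heig s hs _)] using hC2 s hs _ ((horth s hs).1 0) (v i s) (v j s)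
  set Cf := ((Finset.univ.filter fun i : Fin n => i ≠ 0).card : ℝ) * (M / √lam0 * C)
  have hf_le : ∀ s ∈ I, |f s| ≤ Cf := fun s hs => by
    rw [hf s hs]
    exact abs_sum_div_sqrt_mul_le _ hlam0 (fun i _ => ha_le s hs i)
      (fun i hi => hA s hs i (Finset.mem_filter.mp hi).2) (fun i _ => hd2F_le s hs i 0)
  have hderiv_le : ∀ s ∈ I, |2 * a 0 s * h s + 2 * f s * √(lam s 0)|
      ≤ 2 * (M * C) + 2 * Cf * √(lam s 0) := fun s hs => by
    refine (abs_add_le _ _).trans ?_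
    rw [abs_mul, abs_mul, abs_mul, abs_mul, abs_two, abs_of_nonneg (Real.sqrt_nonneg _),
      mul_assoc]
    gcongr
    exacts [ha_le s hs 0, hh s hs ▸ hd2F_le s hs 0 0, hf_le s hs]
  obtain ⟨CL, hCL₀, hCL⟩ := hIord.convex.exists_le_of_abs_hasDerivWithinAt_le_add_mul_sqrt
    ((Metric.isBounded_Ico 0 1).subset hIsub) (by positivity) (by positivity)
    (fun s hs => (hpos s hs).le) hderiv hderiv_le
  exact ⟨hderiv, hsqrt_deriv, ⟨2 * (M * C) + 2 * Cf * √CL, by positivity, fun s hs => (hCL s hs).2⟩,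
    ⟨Cf, by positivity, hf_le⟩, ⟨CL, hCL₀, fun s hs => (hCL s hs).1⟩⟩

/-- **Proposition (derivative of the least eigenvalue along the PLE).**
Along a solution of the PLE on a bounded interval `I ⊆ [0,1)` with `λ₁ > 0`,
`λ_i ≥ λ₀` for `i ≥ 2`, `λ₁` and `z₁` differentiable, and a uniform bound `C`
on the second differential, one has `dλ₁/ds = 2a₁h + 2f√λ₁`, equivalently
`d√λ₁/ds = (a₁/√λ₁)h + f`; moreover `|dλ₁/ds| ≤ C₀` for some `C₀ ≥ 0`, and both
`f` and `λ₁` are bounded on `I`. -/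
theorem least_eigenvalue_derivative
    {X : Type*} [NormedAddCommGroup X] [InnerProductSpace ℝ X] [CompleteSpace X]
    {n : ℕ} [NeZero n] (F : X → EuclideanSpace ℝ (Fin n)) (hF : ContDiff ℝ 2 F)
    (I : Set ℝ) (hIsub : I ⊆ Ico 0 1) (hIord : I.OrdConnected)
    -- a C² curve γ on [0,1]
    (γ γ' γ'' : ℝ → EuclideanSpace ℝ (Fin n))
    (hγ : ∀ s ∈ Icc (0:ℝ) 1, HasDerivWithinAt γ (γ' s) (Icc 0 1) s)
    (hγ' : ∀ s ∈ Icc (0:ℝ) 1, HasDerivWithinAt γ' (γ'' s) (Icc 0 1) s)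
    (hγ''c : ContinuousOn γ'' (Icc 0 1))
    -- a solution u of the PLE on I, with derivative u'
    (u : ℝ → X) (u' : ℝ → X)
    (husol : ∀ s ∈ I, HasDerivWithinAt u (u' s) I s)
    (hPLE : ∀ s ∈ I, u' s = (ContinuousLinearMap.adjoint (fderiv ℝ F (u s)))
        (Ring.inverse (gram F (u s)) (γ' s)))
    -- orthonormal eigenvector family with ordered eigenvalues
    (lam : ℝ → Fin n → ℝ) (z : ℝ → Fin n → EuclideanSpace ℝ (Fin n))
    (horth : ∀ s ∈ I, Orthonormal ℝ (z s))
    (heig : ∀ s ∈ I, ∀ i : Fin n, gram F (u s) (z s i) = lam s i • z s i)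
    (hmono : ∀ s ∈ I, Monotone (lam s))
    (hpos : ∀ s ∈ I, 0 < lam s 0)
    (lam0 : ℝ) (hlam0 : 0 < lam0)
    (hA : ∀ s ∈ I, ∀ i : Fin n, i ≠ 0 → lam0 ≤ lam s i)
    -- λ₁ and z₁ are differentiable on I
    (hlamdiff : ∀ s ∈ I, DifferentiableWithinAt ℝ (fun t => lam t 0) I s)
    (hzdiff : ∀ s ∈ I, DifferentiableWithinAt ℝ (fun t => z t 0) I s)
    -- uniform bound on the second differential along u
    (C : ℝ) (hC : 0 < C)
    (hC2 : ∀ s ∈ I, ∀ zz : EuclideanSpace ℝ (Fin n), ‖zz‖ = 1 →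
        ∀ v w : X, |⟪zz, d2F F (u s) v w⟫| ≤ C * ‖v‖ * ‖w‖)
    -- the coefficients a_i, the normalized switching functions v_i, and h, f
    (a : Fin n → ℝ → ℝ) (ha : ∀ s ∈ I, ∀ i : Fin n, a i s = ⟪γ' s, z s i⟫)
    (v : Fin n → ℝ → X)
    (hv : ∀ s ∈ I, ∀ i : Fin n, v i s = (Real.sqrt (lam s i))⁻¹ •
        (ContinuousLinearMap.adjoint (fderiv ℝ F (u s))) (z s i))
    (h f : ℝ → ℝ)
    (hh : ∀ s ∈ I, h s = ⟪z s 0, d2F F (u s) (v 0 s) (v 0 s)⟫)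
    (hf : ∀ s ∈ I, f s = ∑ i ∈ Finset.univ.filter (fun i : Fin n => i ≠ 0),
        (a i s / Real.sqrt (lam s i)) * ⟪z s 0, d2F F (u s) (v i s) (v 0 s)⟫) :
    (∀ s ∈ I, HasDerivWithinAt (fun t => lam t 0)
        (2 * a 0 s * h s + 2 * f s * Real.sqrt (lam s 0)) I s) ∧
    (∀ s ∈ I, HasDerivWithinAt (fun t => Real.sqrt (lam t 0))
        (a 0 s / Real.sqrt (lam s 0) * h s + f s) I s) ∧
    (∃ C₀ ≥ (0:ℝ), ∀ s ∈ I,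
        |2 * a 0 s * h s + 2 * f s * Real.sqrt (lam s 0)| ≤ C₀) ∧
    (∃ Cf ≥ (0:ℝ), ∀ s ∈ I, |f s| ≤ Cf) ∧
    (∃ CL ≥ (0:ℝ), ∀ s ∈ I, lam s 0 ≤ CL) :=
  least_eigenvalue_derivative_general F hF I hIsub hIord γ' γ'' hγ' u u' husol hPLE lam z horth heig
    hpos lam0 hlam0 hA hzdiff C hC hC2 a ha v hv h f hh hf
end

section
/- Let K, C̃, C₀ > 0 and α < β be reals. Let g : [α,β] → ℝ be differentiable and ℓ : [α,β] → (0,∞) be such that for every s ∈ [α,β]: |g(s)| > √(2C̃/K), |g'(s)| ≥ (K g(s)² − C̃)/ℓ(s), and |g(s)| ℓ(s) ≤ C₀. Then g has constant sign and is strictly monotone on [α,β], and ∫_α^β |g(s)| ds ≤ 2√2 · C₀ / √(C̃ K). -/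
open Set intervalIntegral MeasureTheory

/-!
Since `K g² > 2C̃`, the hypotheses give `|g'| ≥ K g² / (2ℓ) ≥ K |g|³ / (2C₀)`. Hence `g'` never
vanishes, so by Darboux's theorem it has a constant sign and `g` is strictly monotone; `g` itself
never vanishes, so by continuity it has a constant sign. The same inequality reads
`|g| ≤ (2C₀/K) |(1/g)'|`, and as `(1/g)'` has a constant sign, the integral of `|(1/g)'|` is
`|1/g(β) - 1/g(α)| ≤ 2 / √(2C̃/K)`.
-/

lemma lt_mul_sq_of_sqrt_div_lt_abs {a K x : ℝ} (hK : 0 < K) (h : √(a / K) < |x|) :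
    a < K * x ^ 2 := by
  rw [Real.sqrt_lt' ((Real.sqrt_nonneg _).trans_lt h), sq_abs, div_lt_iff₀ hK] at h
  linarith

lemma abs_pow_three_le_of_lt_mul_sq {K Ct C₀ l x x' : ℝ} (hK : 0 < K) (hl : 0 < l)
    (hx : 2 * Ct < K * x ^ 2) (hx' : (K * x ^ 2 - Ct) / l ≤ |x'|) (hxl : |x| * l ≤ C₀) :
    |x| ^ 3 ≤ 2 * C₀ / K * |x'| := by
  rw [div_le_iff₀ hl] at hx'
  have hsq : K * x ^ 2 ≤ 2 * (|x'| * l) := by linarith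
  rw [div_mul_eq_mul_div, le_div_iff₀ hK]
  calc |x| ^ 3 * K = |x| * (K * x ^ 2) := by rw [← sq_abs x]; ring
    _ ≤ |x| * (2 * (|x'| * l)) := by gcongr
    _ = 2 * |x'| * (|x| * l) := by ring
    _ ≤ 2 * |x'| * C₀ := by gcongr
    _ = 2 * C₀ * |x'| := by ring

lemma forall_pos_or_forall_neg_of_forall_ne_zero {X : Type*} [TopologicalSpace X] {s : Set X}
    {f : X → ℝ} (hs : IsPreconnected s) (hf : ContinuousOn f s) (hf₀ : ∀ x ∈ s, f x ≠ 0) :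
    (∀ x ∈ s, 0 < f x) ∨ ∀ x ∈ s, f x < 0 := by
  contrapose! hf₀
  obtain ⟨⟨a, ha, hfa⟩, ⟨b, hb, hfb⟩⟩ := hf₀
  exact hs.intermediate_value ha hb hf ⟨hfa, hfb⟩

lemma strictMonoOn_or_strictAntiOn_of_hasDerivWithinAt_ne_zero {D : Set ℝ} (hD : Convex ℝ D)
    {f f' : ℝ → ℝ} (hf : ∀ x ∈ D, HasDerivWithinAt f (f' x) D x) (hf' : ∀ x ∈ D, f' x ≠ 0) :
    StrictMonoOn f D ∨ StrictAntiOn f D := by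
  have hcont : ContinuousOn f D := fun x hx => (hf x hx).continuousWithinAt
  have hint : ∀ x ∈ interior D, HasDerivWithinAt f (f' x) (interior D) x := fun x hx =>
    (hf x (interior_subset hx)).mono interior_subset
  rcases hasDerivWithinAt_forall_lt_or_forall_gt_of_forall_ne hD hf hf' with hneg | hpos
  · exact .inr <| strictAntiOn_of_hasDerivWithinAt_neg hD hcont hint fun x hx =>
      hneg x (interior_subset hx)
  · exact .inl <| strictMonoOn_of_hasDerivWithinAt_pos hD hcont hint fun x hx =>
      hpos x (interior_subset hx)

lemma integral_le_abs_sub_of_le_abs_deriv {f ψ ψ' : ℝ → ℝ} {a b : ℝ} (hab : a ≤ b)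
    (hf : IntegrableOn f (Icc a b))
    (hψ : ∀ x ∈ Icc a b, HasDerivWithinAt ψ (ψ' x) (Icc a b) x)
    (hψ' : ∀ x ∈ Icc a b, ψ' x ≠ 0) (hfψ : ∀ x ∈ Icc a b, f x ≤ |ψ' x|) :
    ∫ x in a..b, f x ≤ |ψ b - ψ a| := by
  have hcont : ContinuousOn ψ (Icc a b) := fun x hx => (hψ x hx).continuousWithinAt
  have hderiv : ∀ x ∈ Ioo a b, HasDerivWithinAt ψ (ψ' x) (Ioi x) x := fun x hx =>
    ((hψ x (Ioo_subset_Icc_self hx)).hasDerivAt (Icc_mem_nhds hx.1 hx.2)).hasDerivWithinAt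
  rcases hasDerivWithinAt_forall_lt_or_forall_gt_of_forall_ne (convex_Icc a b) hψ hψ' with
    hneg | hpos
  · calc ∫ x in a..b, f x ≤ -ψ b - -ψ a :=
          integral_le_sub_of_hasDeriv_right_of_le hab hcont.neg (fun x hx => (hderiv x hx).neg) hf
            fun x hx => by
              simpa [abs_of_neg (hneg x (Ioo_subset_Icc_self hx))] using
                hfψ x (Ioo_subset_Icc_self hx)
      _ ≤ |ψ b - ψ a| := by linarith [neg_abs_le (ψ b - ψ a)]
  · calc ∫ x in a..b, f x ≤ ψ b - ψ a :=
          integral_le_sub_of_hasDeriv_right_of_le hab hcont hderiv hf fun x hx => by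
              simpa [abs_of_pos (hpos x (Ioo_subset_Icc_self hx))] using
                hfψ x (Ioo_subset_Icc_self hx)
      _ ≤ |ψ b - ψ a| := le_abs_self _

lemma integral_abs_le_of_abs_pow_three_le {g g' : ℝ → ℝ} {a b c m : ℝ} (hab : a ≤ b)
    (hc : 0 < c) (hm : 0 < m) (hg : ∀ x ∈ Icc a b, HasDerivWithinAt g (g' x) (Icc a b) x)
    (hg' : ∀ x ∈ Icc a b, g' x ≠ 0) (hgm : ∀ x ∈ Icc a b, m ≤ |g x|)
    (hgg' : ∀ x ∈ Icc a b, |g x| ^ 3 ≤ c * |g' x|) :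
    ∫ x in a..b, |g x| ≤ 2 * c / m := by
  have hgc : ContinuousOn g (Icc a b) := fun x hx => (hg x hx).continuousWithinAt
  have hg₀ : ∀ x ∈ Icc a b, 0 < |g x| := fun x hx => hm.trans_le (hgm x hx)
  have hψ : ∀ x ∈ Icc a b, HasDerivWithinAt (fun x => c * (g x)⁻¹)
      (c * (-g' x / g x ^ 2)) (Icc a b) x := fun x hx =>
    ((hg x hx).inv (abs_pos.mp (hg₀ x hx))).const_mul c
  have hinv : ∀ x ∈ Icc a b, |(g x)⁻¹| ≤ m⁻¹ := fun x hx => by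
    rw [abs_inv]; exact inv_anti₀ hm (hgm x hx)
  calc ∫ x in a..b, |g x| ≤ |c * (g b)⁻¹ - c * (g a)⁻¹| := by
        refine integral_le_abs_sub_of_le_abs_deriv hab hgc.abs.integrableOn_Icc hψ
          (fun x hx => ?_) fun x hx => ?_
        · exact mul_ne_zero hc.ne' (div_ne_zero (neg_ne_zero.mpr (hg' x hx))
            (pow_ne_zero 2 (abs_pos.mp (hg₀ x hx))))
        · rw [abs_mul, abs_of_pos hc, abs_div, abs_neg, abs_pow, mul_div_assoc',
            le_div_iff₀ (pow_pos (hg₀ x hx) 2)]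
          calc |g x| * |g x| ^ 2 = |g x| ^ 3 := by ring
            _ ≤ c * |g' x| := hgg' x hx
    _ ≤ c * (|(g b)⁻¹| + |(g a)⁻¹|) := by
        rw [← mul_sub, abs_mul, abs_of_pos hc]
        exact mul_le_mul_of_nonneg_left (abs_sub _ _) hc.le
    _ ≤ c * (m⁻¹ + m⁻¹) := by
        gcongr
        exacts [hinv b (right_mem_Icc.mpr hab), hinv a (left_mem_Icc.mpr hab)]
    _ = 2 * c / m := by ring

lemma two_mul_div_div_sqrt_div {K Ct : ℝ} (hK : 0 < K) (hCt : 0 < Ct) (C₀ : ℝ) :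
    2 * (2 * C₀ / K) / √(2 * Ct / K) = 2 * √2 * C₀ / √(Ct * K) := by
  have hsqrt : √(2 * Ct / K) = √2 * √(Ct * K) / K := by
    rw [← Real.sqrt_mul zero_le_two, show 2 * Ct / K = 2 * (Ct * K) / K ^ 2 by field_simp,
      Real.sqrt_div' _ (sq_nonneg K), Real.sqrt_sq hK.le]
  have : 0 < √(Ct * K) := Real.sqrt_pos.mpr (by positivity)
  rw [hsqrt]
  field_simp
  rw [Real.sq_sqrt zero_le_two]
  ring

/-- **Estimate on intervals where `|g|` is large.** If on `[α,β]` we have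
`|g| > √(2C̃/K)`, `|g'| ≥ (K g² − C̃)/ℓ` and `|g| ℓ ≤ C₀` with `ℓ > 0`, then `g`
has constant sign, is strictly monotone, and
`∫_α^β |g| ≤ 2√2 C₀ / √(C̃ K)`. -/
theorem large_g_interval_estimate
    (K Ct C₀ : ℝ) (hK : 0 < K) (hCt : 0 < Ct) (hC₀ : 0 < C₀)
    (α β : ℝ) (hαβ : α < β)
    (g g' l : ℝ → ℝ)
    (hg : ∀ s ∈ Icc α β, HasDerivWithinAt g (g' s) (Icc α β) s)
    (hl : ∀ s ∈ Icc α β, 0 < l s)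
    (h1 : ∀ s ∈ Icc α β, Real.sqrt (2 * Ct / K) < |g s|)
    (h2 : ∀ s ∈ Icc α β, (K * g s ^ 2 - Ct) / l s ≤ |g' s|)
    (h3 : ∀ s ∈ Icc α β, |g s| * l s ≤ C₀) :
    ((∀ s ∈ Icc α β, 0 < g s) ∨ (∀ s ∈ Icc α β, g s < 0)) ∧
    (StrictMonoOn g (Icc α β) ∨ StrictAntiOn g (Icc α β)) ∧
    (∫ s in α..β, |g s|) ≤ 2 * Real.sqrt 2 * C₀ / Real.sqrt (Ct * K) := by
  have hm : 0 < √(2 * Ct / K) := Real.sqrt_pos.mpr (by positivity)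
  have hg₀ : ∀ s ∈ Icc α β, 0 < |g s| := fun s hs => hm.trans (h1 s hs)
  have hcube : ∀ s ∈ Icc α β, |g s| ^ 3 ≤ 2 * C₀ / K * |g' s| := fun s hs =>
    abs_pow_three_le_of_lt_mul_sq hK (hl s hs) (lt_mul_sq_of_sqrt_div_lt_abs hK (h1 s hs))
      (h2 s hs) (h3 s hs)
  have hg' : ∀ s ∈ Icc α β, g' s ≠ 0 := fun s hs => abs_pos.mp <|
    pos_of_mul_pos_right ((pow_pos (hg₀ s hs) 3).trans_le (hcube s hs)) (by positivity)
  refine ⟨forall_pos_or_forall_neg_of_forall_ne_zero isPreconnected_Icc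
      (fun s hs => (hg s hs).continuousWithinAt) fun s hs => abs_pos.mp (hg₀ s hs),
    strictMonoOn_or_strictAntiOn_of_hasDerivWithinAt_ne_zero (convex_Icc α β) hg hg', ?_⟩
  rw [← two_mul_div_div_sqrt_div hK hCt]
  exact integral_abs_le_of_abs_pow_three_le hαβ.le (by positivity) hm hg hg'
    (fun s hs => (h1 s hs).le) hcube
end
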